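/- arXiv:1707.03561 — 2 statements merged into one kernel-verified Lean document; each statement's English description precedes it below -/
import Mathlib

section
/- Let c₁ > 0 and c₃ < c₃₂ = −(10/9)·√(2c₁), and let A₃ = (−9c₃ − √(81c₃² − 200c₁))/100. Then at the point (A, Ω) = (A₃, 1) one has ∂²g/∂A² ≠ 0 and det(d²g) = (∂²g/∂A²)(∂²g/∂Ω²) − (∂²g/∂A∂Ω)² < 0; i.e., S₃ satisfies the nondegeneracy conditions of a simple bifurcation singularity. -/
/-- The harmonic-balance frequency-response function
`g(A, Ω, F, c₁, c₃)` of the oscillator `ẍ + x + c₁ẋ + c₃ẋ³ + ẋ⁵ = 2f cos(ωt)`. -/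
noncomputable def g (A Ω F c1 c3 : ℝ) : ℝ :=
  100 * A ^ 5 * Ω ^ 5 + 60 * A ^ 4 * c3 * Ω ^ 4
    + A ^ 3 * Ω ^ 3 * (20 * c1 + 9 * c3 ^ 2) + 6 * A ^ 2 * c1 * c3 * Ω ^ 2
    + A * ((c1 ^ 2 - 2) * Ω + Ω ^ 2 + 1) - F

/-- `∂²g/∂A²` at `(A₀, Ω₀)`. -/
noncomputable def gAA (A0 Ω0 F c1 c3 : ℝ) : ℝ :=
  deriv (deriv (fun A => g A Ω0 F c1 c3)) A0

/-- `∂²g/∂Ω²` at `(A₀, Ω₀)`. -/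
noncomputable def gΩΩ (A0 Ω0 F c1 c3 : ℝ) : ℝ :=
  deriv (deriv (fun Ω => g A0 Ω F c1 c3)) Ω0

/-- mixed derivative `∂²g/∂A∂Ω` at `(A₀, Ω₀)`. -/
noncomputable def gAΩ (A0 Ω0 F c1 c3 : ℝ) : ℝ :=
  deriv (fun Ω => deriv (fun A => g A Ω F c1 c3) A0) Ω0

/-- determinant of the Hessian of `g` in the variables `(A, Ω)`. -/
noncomputable def detHess (A0 Ω0 F c1 c3 : ℝ) : ℝ :=
  gAA A0 Ω0 F c1 c3 * gΩΩ A0 Ω0 F c1 c3 - (gAΩ A0 Ω0 F c1 c3) ^ 2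

lemma hasDerivAt_P5 (a b c d e f x : ℝ) :
    HasDerivAt (fun x : ℝ => a*x^5 + b*x^4 + c*x^3 + d*x^2 + e*x + f)
      (5*a*x^4 + 4*b*x^3 + 3*c*x^2 + 2*d*x + e) x := by
  have h := (((((((hasDerivAt_pow 5 x).const_mul a).add
      ((hasDerivAt_pow 4 x).const_mul b)).add
      ((hasDerivAt_pow 3 x).const_mul c)).add
      ((hasDerivAt_pow 2 x).const_mul d)).add
      ((hasDerivAt_id x).const_mul e)).add_const f)
  refine h.congr_deriv ?_; push_cast; ring

lemma deriv_P5 (a b c d e f : ℝ) :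
    deriv (fun x : ℝ => a*x^5 + b*x^4 + c*x^3 + d*x^2 + e*x + f)
      = fun x => 5*a*x^4 + 4*b*x^3 + 3*c*x^2 + 2*d*x + e :=
  funext fun x => (hasDerivAt_P5 a b c d e f x).deriv

lemma deriv_P4 (b c d e f : ℝ) :
    deriv (fun x : ℝ => b*x^4 + c*x^3 + d*x^2 + e*x + f)
      = fun x => 4*b*x^3 + 3*c*x^2 + 2*d*x + e := by
  have h : (fun x : ℝ => b*x^4 + c*x^3 + d*x^2 + e*x + f)
      = fun x : ℝ => (0:ℝ)*x^5 + b*x^4 + c*x^3 + d*x^2 + e*x + f := by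
    funext x; ring
  rw [h, deriv_P5]; funext x; ring

lemma gAA_eq (A0 F c1 c3 : ℝ) :
    gAA A0 1 F c1 c3
      = 2000*A0^3 + 720*c3*A0^2 + 6*A0*(20*c1 + 9*c3^2) + 12*c1*c3 := by
  unfold gAA
  have h1 : (fun A => g A 1 F c1 c3)
      = fun A : ℝ => (100:ℝ)*A^5 + (60*c3)*A^4 + (20*c1+9*c3^2)*A^3
        + (6*c1*c3)*A^2 + (c1^2)*A + (-F) := by
    funext A; simp only [g]; ring
  rw [h1, deriv_P5]
  have h2 : (fun x : ℝ => 5*(100:ℝ)*x^4 + 4*(60*c3)*x^3 + 3*(20*c1+9*c3^2)*x^2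
        + 2*(6*c1*c3)*x + c1^2)
      = fun x : ℝ => (500:ℝ)*x^4 + (240*c3)*x^3 + (3*(20*c1+9*c3^2))*x^2
        + (12*c1*c3)*x + (c1^2) := by
    funext x; ring
  rw [h2, deriv_P4]; ring

lemma gΩΩ_eq (A0 F c1 c3 : ℝ) :
    gΩΩ A0 1 F c1 c3
      = 2000*A0^5 + 720*A0^4*c3 + 6*A0^3*(20*c1 + 9*c3^2)
        + 12*A0^2*c1*c3 + 2*A0 := by
  unfold gΩΩ
  have h1 : (fun Ω => g A0 Ω F c1 c3)
      = fun Ω : ℝ => (100*A0^5)*Ω^5 + (60*A0^4*c3)*Ω^4 + (A0^3*(20*c1+9*c3^2))*Ω^3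
        + (6*A0^2*c1*c3 + A0)*Ω^2 + (A0*(c1^2-2))*Ω + (A0 - F) := by
    funext Ω; simp only [g]; ring
  rw [h1, deriv_P5]
  have h2 : (fun x : ℝ => 5*(100*A0^5)*x^4 + 4*(60*A0^4*c3)*x^3
        + 3*(A0^3*(20*c1+9*c3^2))*x^2 + 2*(6*A0^2*c1*c3 + A0)*x + A0*(c1^2-2))
      = fun x : ℝ => (500*A0^5)*x^4 + (240*A0^4*c3)*x^3
        + (3*A0^3*(20*c1+9*c3^2))*x^2 + (12*A0^2*c1*c3 + 2*A0)*x
        + (A0*(c1^2-2)) := by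
    funext x; ring
  rw [h2, deriv_P4]; ring

lemma gAΩ_eq (A0 F c1 c3 : ℝ) :
    gAΩ A0 1 F c1 c3
      = 2500*A0^4 + 960*A0^3*c3 + 9*A0^2*(20*c1 + 9*c3^2)
        + 24*A0*c1*c3 + c1^2 := by
  unfold gAΩ
  have h1 : (fun Ω : ℝ => deriv (fun A => g A Ω F c1 c3) A0)
      = fun Ω : ℝ => (500*A0^4)*Ω^5 + (240*A0^3*c3)*Ω^4
        + (3*A0^2*(20*c1+9*c3^2))*Ω^3 + (12*A0*c1*c3 + 1)*Ω^2
        + (c1^2-2)*Ω + 1 := by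
    funext Ω
    have hg : (fun A => g A Ω F c1 c3)
        = fun A : ℝ => (100*Ω^5)*A^5 + (60*c3*Ω^4)*A^4 + (Ω^3*(20*c1+9*c3^2))*A^3
          + (6*c1*c3*Ω^2)*A^2 + ((c1^2-2)*Ω + Ω^2 + 1)*A + (-F) := by
      funext A; simp only [g]; ring
    rw [hg, deriv_P5]; ring
  rw [h1, deriv_P5]; ring

/-- for `c₃ < c₃₂ = −(10/9)√(2c₁)` the point `S₃`
satisfies the nondegeneracy conditions of a simple bifurcation singularity:
`∂²g/∂A² ≠ 0` and `det(d²g) < 0`. -/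
theorem S3_simple_bifurcation_nondegeneracy (c1 c3 : ℝ) (hc1 : 0 < c1)
    (hc3 : c3 < -(10 / 9) * Real.sqrt (2 * c1))
    (A3 : ℝ)
    (hA3 : A3 = (-9 * c3 - Real.sqrt (81 * c3 ^ 2 - 200 * c1)) / 100) :
    ∀ F : ℝ,
      gAA A3 1 F c1 c3 ≠ 0 ∧ detHess A3 1 F c1 c3 < 0 := by
  intro F
  -- basic facts
  have hs : (0:ℝ) < Real.sqrt (2 * c1) := Real.sqrt_pos.mpr (by linarith)
  have hsq : Real.sqrt (2 * c1) ^ 2 = 2 * c1 := Real.sq_sqrt (by linarith)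
  have hc3neg : c3 < 0 := by nlinarith
  have h81 : 200 * c1 < 81 * c3 ^ 2 := by nlinarith
  set D := Real.sqrt (81 * c3 ^ 2 - 200 * c1) with hD
  have hD2 : D ^ 2 = 81 * c3 ^ 2 - 200 * c1 := Real.sq_sqrt (by linarith)
  have hDpos : 0 < D := Real.sqrt_pos.mpr (by linarith)
  have hDlt : D < -9 * c3 := by nlinarith
  have hApos : 0 < A3 := by rw [hA3]; linarith
  have hAlt : 100 * A3 < -9 * c3 := by rw [hA3]; linarith
  have h50 : 50 * A3 ^ 2 + 9 * c3 * A3 + c1 = 0 := by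
    rw [hA3]; linear_combination (1/200) * hD2
  -- quadratic factor positivity
  have hq : 0 < 2000 * A3 ^ 2 + 480 * c3 * A3 + 27 * c3 ^ 2 := by
    nlinarith [mul_pos (by nlinarith : (0:ℝ) < -(A3 + 9*c3/100))
      (by nlinarith : (0:ℝ) < -(A3 + 15*c3/100))]
  rw [gAA_eq]
  have hgAA : 2000*A3^3 + 720*c3*A3^2 + 6*A3*(20*c1 + 9*c3^2) + 12*c1*c3
      = -2 * A3 * (2000 * A3 ^ 2 + 480 * c3 * A3 + 27 * c3 ^ 2) := by
    linear_combination (120 * A3 + 12 * c3) * h50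
  have hgAAneg : 2000*A3^3 + 720*c3*A3^2 + 6*A3*(20*c1 + 9*c3^2) + 12*c1*c3 < 0 := by
    rw [hgAA]; nlinarith
  refine ⟨ne_of_lt hgAAneg, ?_⟩
  unfold detHess
  rw [gAA_eq, gΩΩ_eq, gAΩ_eq]
  have hmix : 2500*A3^4 + 960*A3^3*c3 + 9*A3^2*(20*c1 + 9*c3^2) + 24*A3*c1*c3 + c1^2
      = A3 * (2000*A3^3 + 720*c3*A3^2 + 6*A3*(20*c1 + 9*c3^2) + 12*c1*c3) := by
    linear_combination (10*A3^2 + 3*A3*c3 + c1) * h50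
  have hOO : 2000*A3^5 + 720*A3^4*c3 + 6*A3^3*(20*c1 + 9*c3^2) + 12*A3^2*c1*c3 + 2*A3
      = A3^2 * (2000*A3^3 + 720*c3*A3^2 + 6*A3*(20*c1 + 9*c3^2) + 12*c1*c3) + 2*A3 := by
    ring
  rw [hmix, hOO]
  have : (2000*A3^3 + 720*c3*A3^2 + 6*A3*(20*c1 + 9*c3^2) + 12*c1*c3) *
      (A3^2 * (2000*A3^3 + 720*c3*A3^2 + 6*A3*(20*c1 + 9*c3^2) + 12*c1*c3) + 2*A3)
      - (A3 * (2000*A3^3 + 720*c3*A3^2 + 6*A3*(20*c1 + 9*c3^2) + 12*c1*c3))^2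
      = 2*A3 * (2000*A3^3 + 720*c3*A3^2 + 6*A3*(20*c1 + 9*c3^2) + 12*c1*c3) := by
    ring
  rw [this]
  nlinarith
end

section
/- Let c₁ > 0 and c₃ = c₃₂ = −(10/9)·√(2c₁). Then A₃ = A₄ = √(2c₁)/10 =: A*, and at the point (A, Ω) = (A*, 1) the following hold: ∂g/∂A = 0, ∂²g/∂A² = 0, ∂g/∂Ω = 0, ∂²g/∂A∂Ω = 0, while ∂³g/∂A³ = (160/3)·c₁ ≠ 0 and ∂²g/∂Ω² = √(2c₁)/5 ≠ 0; i.e., the defining and nondegeneracy conditions of a winged-cusp singularity are satisfied. -/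
lemma deriv_quintic (a b c d e f : ℝ) :
    (deriv fun x : ℝ => a*x^5+b*x^4+c*x^3+d*x^2+e*x+f)
      = fun x => (5*a)*x^4+(4*b)*x^3+(3*c)*x^2+(2*d)*x+e := by
  funext x
  have h : HasDerivAt (fun x : ℝ => a*x^5+b*x^4+c*x^3+d*x^2+e*x+f)
      ((5*a)*x^4+(4*b)*x^3+(3*c)*x^2+(2*d)*x+e) x := by
    have h5 := (hasDerivAt_pow 5 x).const_mul a
    have h4 := (hasDerivAt_pow 4 x).const_mul b
    have h3 := (hasDerivAt_pow 3 x).const_mul c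
    have h2 := (hasDerivAt_pow 2 x).const_mul d
    have h1 := (hasDerivAt_id x).const_mul e
    have H := ((((h5.add h4).add h3).add h2).add h1).add_const f
    refine H.congr_deriv ?_
    push_cast; ring
  exact h.deriv

lemma deriv_quartic (b c d e f : ℝ) :
    (deriv fun x : ℝ => b*x^4+c*x^3+d*x^2+e*x+f)
      = fun x => (4*b)*x^3+(3*c)*x^2+(2*d)*x+e := by
  funext x
  have h : HasDerivAt (fun x : ℝ => b*x^4+c*x^3+d*x^2+e*x+f)
      ((4*b)*x^3+(3*c)*x^2+(2*d)*x+e) x := by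
    have h4 := (hasDerivAt_pow 4 x).const_mul b
    have h3 := (hasDerivAt_pow 3 x).const_mul c
    have h2 := (hasDerivAt_pow 2 x).const_mul d
    have h1 := (hasDerivAt_id x).const_mul e
    have H := (((h4.add h3).add h2).add h1).add_const f
    refine H.congr_deriv ?_
    push_cast; ring
  exact h.deriv

lemma deriv_cubic (c d e f : ℝ) :
    (deriv fun x : ℝ => c*x^3+d*x^2+e*x+f)
      = fun x => (3*c)*x^2+(2*d)*x+e := by
  funext x
  have h : HasDerivAt (fun x : ℝ => c*x^3+d*x^2+e*x+f)
      ((3*c)*x^2+(2*d)*x+e) x := by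
    have h3 := (hasDerivAt_pow 3 x).const_mul c
    have h2 := (hasDerivAt_pow 2 x).const_mul d
    have h1 := (hasDerivAt_id x).const_mul e
    have H := ((h3.add h2).add h1).add_const f
    refine H.congr_deriv ?_
    push_cast; ring
  exact h.deriv

/-- at `c₃ = c₃₂ = −(10/9)√(2c₁)` one has
`A₃ = A₄ = √(2c₁)/10 = A*` and at `(A*, 1)` the defining and nondegeneracy
conditions of a winged-cusp singularity hold:
`g_A = g_AA = g_Ω = g_AΩ = 0`, `g_AAA = (160/3)c₁ ≠ 0`, `g_ΩΩ = √(2c₁)/5 ≠ 0`. -/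
theorem winged_cusp (c1 c3 : ℝ) (hc1 : 0 < c1)
    (hc3 : c3 = -(10 / 9) * Real.sqrt (2 * c1))
    (Astar : ℝ) (hAstar : Astar = Real.sqrt (2 * c1) / 10) :
    (-9 * c3 - Real.sqrt (81 * c3 ^ 2 - 200 * c1)) / 100 = Astar ∧
    (-9 * c3 + Real.sqrt (81 * c3 ^ 2 - 200 * c1)) / 100 = Astar ∧
    ∀ F : ℝ,
      deriv (fun A => g A 1 F c1 c3) Astar = 0 ∧
      deriv (deriv (fun A => g A 1 F c1 c3)) Astar = 0 ∧
      deriv (fun Ω => g Astar Ω F c1 c3) 1 = 0 ∧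
      deriv (fun Ω => deriv (fun A => g A Ω F c1 c3) Astar) 1 = 0 ∧
      (deriv (deriv (deriv (fun A => g A 1 F c1 c3))) Astar = (160 / 3) * c1 ∧
        (160 / 3) * c1 ≠ 0) ∧
      (deriv (deriv (fun Ω => g Astar Ω F c1 c3)) 1 = Real.sqrt (2 * c1) / 5 ∧
        Real.sqrt (2 * c1) / 5 ≠ 0) := by
  have hs0 : 0 < Real.sqrt (2 * c1) := Real.sqrt_pos.mpr (by linarith)
  have hs2 : Real.sqrt (2 * c1) ^ 2 = 2 * c1 := Real.sq_sqrt (by linarith)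
  set s := Real.sqrt (2 * c1) with hsdef
  have hc : c1 = s ^ 2 / 2 := by linarith
  have hzero : 81 * c3 ^ 2 - 200 * c1 = 0 := by
    rw [hc3]; linear_combination 100 * hs2
  refine ⟨?_, ?_, ?_⟩
  · rw [hzero, Real.sqrt_zero, hc3, hAstar]; ring
  · rw [hzero, Real.sqrt_zero, hc3, hAstar]; ring
  intro F
  have hfA : (fun A => g A 1 F c1 c3)
      = fun x : ℝ => 100*x^5 + (60*c3)*x^4 + (20*c1+9*c3^2)*x^3
          + (6*c1*c3)*x^2 + (c1^2)*x + (-F) := by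
    funext x; simp only [g]; ring
  have hfΩ : (fun Ω => g Astar Ω F c1 c3)
      = fun x : ℝ => (100*Astar^5)*x^5 + (60*Astar^4*c3)*x^4
          + (Astar^3*(20*c1+9*c3^2))*x^3 + (6*Astar^2*c1*c3 + Astar)*x^2
          + (Astar*(c1^2-2))*x + (Astar - F) := by
    funext x; simp only [g]; ring
  have hmix : (fun Ω => deriv (fun A => g A Ω F c1 c3) Astar)
      = fun x : ℝ => (500*Astar^4)*x^5 + (240*c3*Astar^3)*x^4
          + (3*Astar^2*(20*c1+9*c3^2))*x^3 + (12*c1*c3*Astar + 1)*x^2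
          + (c1^2-2)*x + 1 := by
    funext Ω
    have h1 : (fun A => g A Ω F c1 c3)
        = fun x : ℝ => (100*Ω^5)*x^5 + (60*c3*Ω^4)*x^4 + (Ω^3*(20*c1+9*c3^2))*x^3
            + (6*c1*c3*Ω^2)*x^2 + ((c1^2-2)*Ω+Ω^2+1)*x + (-F) := by
      funext x; simp only [g]; ring
    rw [h1, deriv_quintic]
    ring
  refine ⟨?_, ?_, ?_, ?_, ⟨?_, by positivity⟩, ?_, div_ne_zero hs0.ne' (by norm_num)⟩
  · rw [hfA, deriv_quintic]
    simp only []
    rw [hAstar, hc3, hc]; ring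
  · rw [hfA, deriv_quintic, deriv_quartic]
    simp only []
    rw [hAstar, hc3, hc]; ring
  · rw [hfΩ, deriv_quintic]
    simp only []
    rw [hAstar, hc3, hc]; ring
  · rw [hmix, deriv_quintic]
    simp only []
    rw [hAstar, hc3, hc]; ring
  · rw [hfA, deriv_quintic, deriv_quartic, deriv_cubic]
    simp only []
    rw [hAstar, hc3, hc]; ring
  · rw [hfΩ, deriv_quintic, deriv_quartic]
    simp only []
    rw [hAstar, hc3, hc]; ring
end
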